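/- arXiv:2008.13512 — 6 statements merged into one kernel-verified Lean document; each statement's English description precedes it below -/
import Mathlib

section
/- If K ⊆ ℝ² is compact, then the one-dimensional Hausdorff content of K equals the one-dimensional Hausdorff content of its topological boundary ∂K. -/
/-!
Monotonicity gives `H1content (frontier K) ≤ H1content K`. Conversely, take a finite cover of
`∂K` by closed disks. Replacing two intersecting disks of radii `r₁, r₂` by one disk of radius
`r₁ + r₂` containing both, repeatedly, makes the disks pairwise disjoint without increasing the sum
of the diameters. Pairwise disjoint closed disks with union `F ⊇ ∂K` cover `K`: otherwise let `z`
maximize a linear functional `f` over the closure of the open set `K \ F`. Then `z ∈ F`, say in the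
disk `B(c, r)`, and a point `v ∈ K \ F` close to `z` lies on a circle `S(c, ρ)`, `r < ρ`, that
misses `F`. This circle is connected, meets `K` at `v`, and its point maximizing `f` lies above
`f z`, hence outside `K`; so it meets `∂K ⊆ F`, a contradiction.
-/

open Metric ENNReal

/-- The one-dimensional Hausdorff content of a set `K ⊆ ℝ²`: the infimum over
finite collections of closed disks covering `K` of the sum of their diameters. -/
noncomputable def H1content (K : Set (EuclideanSpace ℝ (Fin 2))) : ℝ≥0∞ :=
  ⨅ (s : Finset (EuclideanSpace ℝ (Fin 2) × ℝ))
    (_ : K ⊆ ⋃ p ∈ s, closedBall p.1 p.2),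
      ∑ p ∈ s, ENNReal.ofReal (2 * p.2)

open Set Finset

theorem IsPreconnected.inter_frontier_nonempty {X : Type*} [TopologicalSpace X] {s t : Set X}
    (hs : IsPreconnected s) (hst : (s ∩ t).Nonempty) (hst' : (s \ t).Nonempty) :
    (s ∩ frontier t).Nonempty := by
  by_contra h
  have hcover : s ⊆ interior t ∪ interior tᶜ := fun x hx ↦ by
    rw [← compl_frontier_eq_union_interior]
    exact fun hxt ↦ h ⟨x, hx, hxt⟩
  obtain ⟨x, hxs, hxt⟩ := hst
  have hx : x ∈ interior t := (hcover hxs).resolve_right fun hx ↦ interior_subset hx hxt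
  obtain ⟨y, hys, hyt⟩ := hst'
  exact hyt (interior_subset (hs.subset_left_of_subset_union isOpen_interior isOpen_interior
    (disjoint_compl_right.mono interior_subset interior_subset) hcover ⟨x, hxs, hx⟩ hys))

theorem isOpen_sdiff_of_frontier_subset {X : Type*} [TopologicalSpace X] {K F : Set X}
    (hF : IsClosed F) (hKF : frontier K ⊆ F) : IsOpen (K \ F) := by
  have : K \ F = interior K \ F := by
    refine Subset.antisymm (fun x hx ↦ ⟨?_, hx.2⟩) (sdiff_subset_sdiff_left interior_subset)
    rw [← self_sdiff_frontier]
    exact ⟨hx.1, fun hxK ↦ hx.2 (hKF hxK)⟩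
  exact this ▸ isOpen_interior.sdiff hF

section Covers

variable {E : Type*}

def closedBallUnion [PseudoMetricSpace E] (s : Finset (E × ℝ)) : Set E :=
  ⋃ p ∈ s, closedBall p.1 p.2

noncomputable def diamSum (s : Finset (E × ℝ)) : ℝ≥0∞ :=
  ∑ p ∈ s, ENNReal.ofReal (2 * p.2)

theorem closedBallUnion_insert [PseudoMetricSpace E] [DecidableEq E] (p : E × ℝ)
    (s : Finset (E × ℝ)) :
    closedBallUnion (insert p s) = closedBall p.1 p.2 ∪ closedBallUnion s :=
  Finset.set_biUnion_insert _ _ _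

theorem isClosed_closedBallUnion [PseudoMetricSpace E] (s : Finset (E × ℝ)) :
    IsClosed (closedBallUnion s) :=
  isClosed_biUnion_finset fun _ _ ↦ isClosed_closedBall

theorem diamSum_insert [DecidableEq E] {p : E × ℝ} {s : Finset (E × ℝ)} (hp : p ∉ s) :
    diamSum (insert p s) = ENNReal.ofReal (2 * p.2) + diamSum s :=
  sum_insert hp

theorem diamSum_insert_le [DecidableEq E] (p : E × ℝ) (s : Finset (E × ℝ)) :
    diamSum (insert p s) ≤ ENNReal.ofReal (2 * p.2) + diamSum s := by
  by_cases hp : p ∈ s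
  · rw [Finset.insert_eq_of_mem hp]
    exact le_add_self
  · rw [diamSum_insert hp]

end Covers

section Merging

variable {E : Type*} [SeminormedAddCommGroup E] [NormedSpace ℝ E]

theorem exists_closedBall_union_subset_closedBall {c₁ c₂ : E} {r₁ r₂ : ℝ} (h₁ : 0 ≤ r₁)
    (h₂ : 0 ≤ r₂) (h : dist c₁ c₂ ≤ r₁ + r₂) :
    ∃ c, closedBall c₁ r₁ ∪ closedBall c₂ r₂ ⊆ closedBall c (r₁ + r₂) := by
  obtain hr | hr := (add_nonneg h₁ h₂).eq_or_lt
  · refine ⟨c₁, union_subset (closedBall_subset_closedBall (by linarith))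
      (closedBall_subset_closedBall' ?_)⟩
    rw [dist_comm]
    linarith
  refine ⟨AffineMap.lineMap c₁ c₂ (r₂ / (r₁ + r₂)), union_subset (closedBall_subset_closedBall' ?_)
    (closedBall_subset_closedBall' ?_)⟩
  · rw [dist_comm, dist_lineMap_left, Real.norm_of_nonneg (by positivity)]
    have : r₂ / (r₁ + r₂) * dist c₁ c₂ ≤ r₂ / (r₁ + r₂) * (r₁ + r₂) := by gcongr
    rw [div_mul_cancel₀ _ hr.ne'] at this
    linarith
  · rw [dist_comm, dist_lineMap_right]
    have ht : 1 - r₂ / (r₁ + r₂) = r₁ / (r₁ + r₂) := by field_simp; ring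
    rw [ht, Real.norm_of_nonneg (by positivity)]
    have : r₁ / (r₁ + r₂) * dist c₁ c₂ ≤ r₁ / (r₁ + r₂) * (r₁ + r₂) := by gcongr
    rw [div_mul_cancel₀ _ hr.ne'] at this
    linarith

theorem exists_card_lt_of_not_pairwiseDisjoint {s : Finset (E × ℝ)}
    (hs : ¬(s : Set (E × ℝ)).PairwiseDisjoint fun p ↦ closedBall p.1 p.2) :
    ∃ t : Finset (E × ℝ), #t < #s ∧ closedBallUnion s ⊆ closedBallUnion t ∧
      diamSum t ≤ diamSum s := by
  classical
  obtain ⟨p, hp, q, hq, hpq, hpq'⟩ : ∃ p ∈ s, ∃ q ∈ s, p ≠ q ∧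
      ¬Disjoint (closedBall p.1 p.2) (closedBall q.1 q.2) := by
    simpa [Set.PairwiseDisjoint, Set.Pairwise] using hs
  obtain ⟨y, hyp, hyq⟩ := Set.not_disjoint_iff.1 hpq'
  have hp₀ : 0 ≤ p.2 := dist_nonneg.trans hyp
  have hq₀ : 0 ≤ q.2 := dist_nonneg.trans hyq
  obtain ⟨c, hc⟩ := exists_closedBall_union_subset_closedBall hp₀ hq₀
    ((dist_triangle_left p.1 q.1 y).trans (add_le_add hyp hyq))
  have hq' : q ∈ s.erase p := mem_erase.2 ⟨hpq.symm, hq⟩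
  set r := (s.erase p).erase q
  have hs_eq : s = insert p (insert q r) := by rw [insert_erase hq', insert_erase hp]
  have hpr : p ∉ insert q r := by simp [r, hpq]
  refine ⟨insert (c, p.2 + q.2) r, ?_, ?_, ?_⟩
  · calc #(insert (c, p.2 + q.2) r) ≤ #r + 1 := card_insert_le _ _
      _ = #(s.erase p) := card_erase_add_one hq'
      _ < #s := card_erase_lt_of_mem hp
  · rw [hs_eq, closedBallUnion_insert, closedBallUnion_insert, closedBallUnion_insert,
      ← union_assoc]
    exact union_subset_union_left _ hc
  · calc diamSum (insert (c, p.2 + q.2) r)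
        ≤ ENNReal.ofReal (2 * (p.2 + q.2)) + diamSum r := diamSum_insert_le _ _
      _ = ENNReal.ofReal (2 * p.2) + (ENNReal.ofReal (2 * q.2) + diamSum r) := by
        rw [mul_add, ENNReal.ofReal_add (by positivity) (by positivity), add_assoc]
      _ = diamSum s := by
        rw [hs_eq, diamSum_insert hpr, diamSum_insert (notMem_erase q _)]

theorem exists_pairwiseDisjoint_closedBallUnion_superset (s : Finset (E × ℝ)) :
    ∃ t : Finset (E × ℝ), closedBallUnion s ⊆ closedBallUnion t ∧ diamSum t ≤ diamSum s ∧
      (t : Set (E × ℝ)).PairwiseDisjoint fun p ↦ closedBall p.1 p.2 := by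
  induction hn : #s using Nat.strong_induction_on generalizing s with
  | _ n ih =>
    by_cases hs : (s : Set (E × ℝ)).PairwiseDisjoint fun p ↦ closedBall p.1 p.2
    · exact ⟨s, subset_rfl, le_rfl, hs⟩
    obtain ⟨t, hts, hst, hdiam⟩ := exists_card_lt_of_not_pairwiseDisjoint hs
    obtain ⟨u, htu, hdiam', hu⟩ := ih _ (hn ▸ hts) t rfl
    exact ⟨u, hst.trans htu, hdiam'.trans hdiam, hu⟩

end Merging

section FrontierCover

variable {E : Type*} [NormedAddCommGroup E] [NormedSpace ℝ E]

theorem exists_norm_le_one_apply_eq_one [Nontrivial E] :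
    ∃ (f : StrongDual ℝ E) (u : E), ‖f‖ ≤ 1 ∧ ‖u‖ = 1 ∧ f u = 1 := by
  obtain ⟨x, hx⟩ := exists_ne (0 : E)
  obtain ⟨f, hf, hfx⟩ := exists_dual_vector ℝ x (norm_ne_zero_iff.2 hx)
  refine ⟨f, ‖x‖⁻¹ • x, hf.le, norm_smul_inv_norm hx, ?_⟩
  simp [hfx, hx]

theorem notMem_of_isMaxOn_closure {U : Set E} (hU : IsOpen U) {f : StrongDual ℝ E} (hf : f ≠ 0)
    {z : E} (hz : IsMaxOn f (closure U) z) : z ∉ U := fun hzU ↦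
  hf (((hz.on_subset subset_closure).isLocalMax (hU.mem_nhds hzU)).hasFDerivAt_eq_zero
    f.hasFDerivAt)

variable [ProperSpace E]

theorem exists_sphere_disjoint_closedBallUnion {s : Finset (E × ℝ)}
    (hs : (s : Set (E × ℝ)).PairwiseDisjoint fun p ↦ closedBall p.1 p.2) {q : E × ℝ} (hq : q ∈ s)
    (hq₀ : 0 ≤ q.2) :
    ∃ δ > 0, ∀ ρ, q.2 < ρ → ρ < q.2 + δ → Disjoint (sphere q.1 ρ) (closedBallUnion s) := by
  classical
  have hqA : closedBall q.1 q.2 ⊆ (closedBallUnion (s.erase q))ᶜ := by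
    refine subset_compl_iff_disjoint_right.2 (disjoint_iUnion₂_right.2 fun p hp ↦ ?_)
    exact hs hq (mem_erase.1 hp).2 (mem_erase.1 hp).1.symm
  obtain ⟨δ, hδ, hδA⟩ := (isCompact_closedBall q.1 q.2).exists_thickening_subset_open
    (isClosed_closedBallUnion _).isOpen_compl hqA
  rw [thickening_closedBall hδ hq₀] at hδA
  refine ⟨δ, hδ, fun ρ hρ hρδ ↦ ?_⟩
  rw [← insert_erase hq, closedBallUnion_insert, disjoint_union_right]
  refine ⟨?_, subset_compl_iff_disjoint_right.1 ((sphere_subset_ball (by linarith)).trans hδA)⟩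
  exact sphere_disjoint_ball.mono_right (closedBall_subset_ball hρ)

theorem subset_closedBallUnion_of_frontier_subset (hE : 1 < Module.rank ℝ E) {K : Set E}
    (hK : IsCompact K) {s : Finset (E × ℝ)}
    (hs : (s : Set (E × ℝ)).PairwiseDisjoint fun p ↦ closedBall p.1 p.2)
    (hKs : frontier K ⊆ closedBallUnion s) : K ⊆ closedBallUnion s := by
  have : Nontrivial E := rank_pos_iff_nontrivial.1 (zero_lt_one.trans hE)
  obtain ⟨f, u, hf, hu, hfu⟩ := exists_norm_le_one_apply_eq_one (E := E)
  set F := closedBallUnion s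
  by_contra hKF
  have hne : (K \ F).Nonempty := sdiff_nonempty.2 hKF
  obtain ⟨z, hzV, hz⟩ := (hK.closure_of_subset sdiff_subset).exists_isMaxOn hne.closure
    f.continuous.continuousOn
  have hzK : z ∈ K := closure_minimal sdiff_subset hK.isClosed hzV
  have hzF : z ∈ F := by
    by_contra hzF
    refine notMem_of_isMaxOn_closure (isOpen_sdiff_of_frontier_subset
      (isClosed_closedBallUnion s) hKs) ?_ hz ⟨hzK, hzF⟩
    rintro rfl
    simp at hfu
  obtain ⟨q, hq, hzq⟩ := mem_iUnion₂.1 hzF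
  obtain ⟨δ, hδ, hsphere⟩ := exists_sphere_disjoint_closedBallUnion hs hq (dist_nonneg.trans hzq)
  obtain ⟨v, hvV, hzv⟩ := mem_closure_iff.1 hzV δ hδ
  set ρ := dist v q.1
  have hρ : q.2 < ρ := not_le.1 fun h ↦ hvV.2 (mem_iUnion₂.2 ⟨q, hq, h⟩)
  have hρδ : ρ < q.2 + δ := by
    linarith [dist_triangle v z q.1, dist_comm z v, mem_closedBall.1 hzq]
  have hw : q.1 + ρ • u ∈ sphere q.1 ρ := by
    rw [mem_sphere, dist_eq_norm, add_sub_cancel_left, norm_smul, hu, mul_one,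
      Real.norm_of_nonneg dist_nonneg]
  have hzw : f z < f (q.1 + ρ • u) := by
    have hzq' : f z - f q.1 ≤ 1 * ‖z - q.1‖ := by
      rw [← map_sub]
      exact (le_abs_self _).trans (f.le_of_opNorm_le hf _)
    rw [map_add, map_smul, hfu, smul_eq_mul, mul_one]
    linarith [mem_closedBall.1 hzq, dist_eq_norm z q.1]
  have hwK : q.1 + ρ • u ∉ K := fun hwK ↦
    hzw.not_ge (hz (subset_closure ⟨hwK, (hsphere ρ hρ hρδ).notMem_of_mem_left hw⟩))
  obtain ⟨y, hy, hyK⟩ := (isConnected_sphere hE q.1 dist_nonneg).isPreconnected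
    |>.inter_frontier_nonempty ⟨v, mem_sphere.2 rfl, hvV.1⟩ ⟨_, hw, hwK⟩
  exact (hsphere ρ hρ hρδ).notMem_of_mem_left hy (hKs hyK)

end FrontierCover

theorem H1content_le_diamSum {K : Set (EuclideanSpace ℝ (Fin 2))}
    {s : Finset (EuclideanSpace ℝ (Fin 2) × ℝ)} (h : K ⊆ closedBallUnion s) :
    H1content K ≤ diamSum s :=
  iInf₂_le s h

theorem H1content_mono : Monotone H1content := fun _ _ hKL ↦
  le_iInf₂ fun _ hs ↦ H1content_le_diamSum (hKL.trans hs)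

/-- If `K ⊆ ℝ²` is compact, then the one-dimensional Hausdorff content of `K`
equals that of its topological boundary. -/
theorem H1content_eq_H1content_frontier
    (K : Set (EuclideanSpace ℝ (Fin 2))) (hK : IsCompact K) :
    H1content K = H1content (frontier K) := by
  refine le_antisymm (le_iInf₂ fun s hs ↦ ?_) (H1content_mono hK.isClosed.frontier_subset)
  have hrank : 1 < Module.rank ℝ (EuclideanSpace ℝ (Fin 2)) := by
    rw [← Module.finrank_eq_rank, finrank_euclideanSpace_fin]
    norm_num
  obtain ⟨t, hst, hts, ht⟩ := exists_pairwiseDisjoint_closedBallUnion_superset s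
  calc H1content K ≤ diamSum t :=
        H1content_le_diamSum (subset_closedBallUnion_of_frontier_subset hrank hK ht (hs.trans hst))
    _ ≤ diamSum s := hts
end

section
/- There exists a constant C > 0 such that for every radius r > 0, every function h in the Sobolev space W^{1,2} of the circle of radius r centered at the origin in ℝ² with real values, and every ε ∈ (0, r], one has ‖h‖_{L^∞}² ≤ C ∫_{S¹_r} (ε |h'|² + h²/ε). -/
/-!
For a `C¹` function `g` of period `L`, `g t ≤ L⁻¹ ∫ g + ∫ |g'|` (integrals over one period): at a
minimum point `g` is at most its average, and from there to `t` it grows by at most the total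
variation over a period. For `g = h²` both terms are bounded by `∫ (ε h'² + h² / ε)`, using
`|2 h h'| ≤ ε h'² + h² / ε`, `h² ≤ ε (ε h'² + h² / ε)` and `ε / (2πr) ≤ 1 / (2π)`.
-/

open Real Set intervalIntegral

theorem Function.Periodic.deriv {𝕜 F : Type*} [NontriviallyNormedField 𝕜] [NormedAddCommGroup F]
    [NormedSpace 𝕜 F] {f : 𝕜 → F} {c : 𝕜} (hf : Function.Periodic f c) :
    Function.Periodic (deriv f) c := fun x => by
  rw [← deriv_comp_add_const, funext hf]

theorem exists_mem_Icc_mul_le_intervalIntegral {g : ℝ → ℝ} {a b : ℝ} (hab : a ≤ b)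
    (hg : ContinuousOn g (Icc a b)) : ∃ s ∈ Icc a b, (b - a) * g s ≤ ∫ x in a..b, g x := by
  obtain ⟨s, hs, hmin⟩ := isCompact_Icc.exists_isMinOn (nonempty_Icc.2 hab) hg
  refine ⟨s, hs, ?_⟩
  simpa [mul_comm] using
    integral_mono_on hab (intervalIntegrable_const (μ := MeasureTheory.volume))
      (hg.intervalIntegrable_of_Icc hab) fun x hx => hmin hx

theorem sub_le_intervalIntegral_abs_deriv {g : ℝ → ℝ} (hg : ContDiff ℝ 1 g) {a s t : ℝ}
    (has : a ≤ s) (hst : s ≤ t) : g t - g s ≤ ∫ x in a..t, |deriv g x| := by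
  have hg' : Continuous (deriv g) := hg.continuous_deriv le_rfl
  calc g t - g s = ∫ x in s..t, deriv g x :=
        (integral_deriv_eq_sub (fun x _ => hg.differentiable one_ne_zero x)
          (hg'.intervalIntegrable s t)).symm
    _ ≤ ∫ x in s..t, |deriv g x| :=
        integral_mono hst (hg'.intervalIntegrable s t) (hg'.abs.intervalIntegrable s t)
          fun x => le_abs_self _
    _ ≤ ∫ x in a..t, |deriv g x| :=
        integral_mono_interval has hst le_rfl (Filter.Eventually.of_forall fun x => abs_nonneg _)
          (hg'.abs.intervalIntegrable a t)

theorem le_inv_mul_integral_add_integral_abs_deriv_of_periodic {g : ℝ → ℝ} {L : ℝ}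
    (hper : Function.Periodic g L) (hg : ContDiff ℝ 1 g) (hL : 0 < L) (t : ℝ) :
    g t ≤ L⁻¹ * (∫ x in (0 : ℝ)..L, g x) + ∫ x in (0 : ℝ)..L, |deriv g x| := by
  have hshift {f : ℝ → ℝ} (hf : Function.Periodic f L) :
      ∫ x in (t - L)..t, f x = ∫ x in (0 : ℝ)..L, f x := by
    simpa using hf.intervalIntegral_add_eq (t - L) 0
  obtain ⟨s, ⟨hts, hst⟩, hmin⟩ :=
    exists_mem_Icc_mul_le_intervalIntegral (sub_le_self t hL.le) hg.continuous.continuousOn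
  have hvar := sub_le_intervalIntegral_abs_deriv hg hts hst
  rw [sub_sub_cancel, hshift hper] at hmin
  rw [hshift (f := fun x => |deriv g x|) fun x => congrArg abs (hper.deriv x)] at hvar
  have hs : g s ≤ L⁻¹ * ∫ x in (0 : ℝ)..L, g x := by
    rwa [le_inv_mul_iff₀ hL]
  linarith

theorem abs_two_mul_mul_le {ε : ℝ} (hε : 0 < ε) (a b : ℝ) :
    |2 * a * b| ≤ ε * b ^ 2 + a ^ 2 / ε := by
  rw [abs_mul, abs_mul, abs_two, ← sq_abs a, ← sq_abs b]
  have key : ε * |b| ^ 2 + |a| ^ 2 / ε - 2 * |a| * |b| = (ε * |b| - |a|) ^ 2 / ε := by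
    field_simp
    ring
  nlinarith [div_nonneg (sq_nonneg (ε * |b| - |a|)) hε.le]

theorem sq_le_mul_mul_sq_add_sq_div {ε : ℝ} (hε : 0 < ε) (a b : ℝ) :
    a ^ 2 ≤ ε * (ε * b ^ 2 + a ^ 2 / ε) := by
  rw [mul_add, mul_div_cancel₀ _ hε.ne']
  nlinarith [sq_nonneg (ε * b)]

/-- Sobolev-type embedding with dependence on `ε` on circles: there is a
constant `C > 0` such that for every radius `r > 0`, every `C¹` function `h` on
the circle of radius `r` (parametrised by arclength, i.e. a `2πr`-periodic
function on `ℝ`), and every `ε ∈ (0, r]`,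
`‖h‖_{L^∞}² ≤ C ∫_{S¹_r} (ε |h'|² + h²/ε)`. -/
theorem sup_sq_le_const_mul_integral_circle :
    ∃ C : ℝ, 0 < C ∧
      ∀ (r : ℝ), 0 < r → ∀ (h : ℝ → ℝ), ContDiff ℝ 1 h →
        Function.Periodic h (2 * π * r) →
        ∀ ε : ℝ, 0 < ε → ε ≤ r →
          ∀ t : ℝ, (h t) ^ 2 ≤
            C * ∫ s in (0 : ℝ)..(2 * π * r),
              (ε * (deriv h s) ^ 2 + (h s) ^ 2 / ε) := by
  refine ⟨1 + 1 / (2 * π), by positivity, fun r hr h hh hper ε hε hεr t => ?_⟩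
  set L := 2 * π * r
  set F : ℝ → ℝ := fun s => ε * (deriv h s) ^ 2 + (h s) ^ 2 / ε
  have hL : 0 < L := by positivity
  have hh' : Continuous (deriv h) := hh.continuous_deriv le_rfl
  have hF : Continuous F := by fun_prop
  have hderiv (s : ℝ) : deriv (fun x => h x ^ 2) s = 2 * h s * deriv h s := by
    simp [hh.differentiable one_ne_zero s]
  have hsq : ∫ s in (0 : ℝ)..L, h s ^ 2 ≤ r * ∫ s in (0 : ℝ)..L, F s := by
    have hI : 0 ≤ ∫ s in (0 : ℝ)..L, F s := integral_nonneg hL.le fun s _ => by positivity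
    refine le_trans ?_ (mul_le_mul_of_nonneg_right hεr hI)
    rw [← integral_const_mul]
    exact integral_mono hL.le ((hh.continuous.pow 2).intervalIntegrable _ _)
      ((hF.const_mul ε).intervalIntegrable _ _) fun s => sq_le_mul_mul_sq_add_sq_div hε _ _
  have hvar : ∫ s in (0 : ℝ)..L, |deriv (fun x => h x ^ 2) s| ≤ ∫ s in (0 : ℝ)..L, F s := by
    simp_rw [hderiv]
    exact integral_mono hL.le
      (((hh.continuous.const_mul 2).mul hh').abs.intervalIntegrable _ _)
      (hF.intervalIntegrable _ _) fun s => abs_two_mul_mul_le hε _ _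
  calc h t ^ 2
      ≤ L⁻¹ * (∫ s in (0 : ℝ)..L, h s ^ 2) + ∫ s in (0 : ℝ)..L, |deriv (fun x => h x ^ 2) s| :=
        le_inv_mul_integral_add_integral_abs_deriv_of_periodic (hper.comp (· ^ 2)) (hh.pow 2) hL t
    _ ≤ L⁻¹ * (r * ∫ s in (0 : ℝ)..L, F s) + ∫ s in (0 : ℝ)..L, F s := by gcongr
    _ = (1 + 1 / (2 * π)) * ∫ s in (0 : ℝ)..L, F s := by
        field_simp [L]
        ring
end

section
/- Let F : ℝ^ν → [0,∞) be C³, vanishing on the compact submanifold N ⊂ ℝ^ν, and suppose that for every y ∈ N and nonzero v ∈ (T_y N)^⊥, D²F(y)[v,v] > 0. Define G(y) := |∇F(y)|². Then G vanishes on N and for every y ∈ N and nonzero v ∈ (T_y N)^⊥, D²G(y)[v,v] > 0. -/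
/-! At a point `y` of `N`, `F` attains its minimum `0`, so `∇F(y) = 0`. Writing `g = ∇F`, the
product rule gives `D²(‖g‖²)(y)[v, v] = 2 ‖Dg(y) v‖²`, since the other term `2 ⟪g(y), D²g(y)[v, v]⟫`
vanishes; and `D²F(y)[v, v] = ⟪Dg(y) v, v⟫ > 0` forces `Dg(y) v ≠ 0`. -/

open InnerProductSpace

section Gradient

variable {E : Type*} [NormedAddCommGroup E] [InnerProductSpace ℝ E] [CompleteSpace E]
  {f : E → ℝ}

theorem IsLocalMin.gradient_eq_zero {y : E} (h : IsLocalMin f y) : gradient f y = 0 := by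
  simp [gradient, h.fderiv_eq_zero]

theorem ContDiff.gradient {n m : WithTop ℕ∞} (hf : ContDiff ℝ n f) (hmn : m + 1 ≤ n) :
    ContDiff ℝ m (gradient f) :=
  (toDual ℝ E).symm.contDiff.comp (hf.fderiv_right hmn)

theorem iteratedFDeriv_two_apply_eq_inner_fderiv_gradient {y : E}
    (h : DifferentiableAt ℝ (gradient f) y) (v w : E) :
    iteratedFDeriv ℝ 2 f y ![v, w] = ⟪fderiv ℝ (gradient f) y v, w⟫_ℝ := by
  have hfderiv : fderiv ℝ f = fun x => innerSL ℝ (gradient f x) := by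
    ext x u
    simp
  have hD2 : HasFDerivAt (fderiv ℝ f) ((innerSL ℝ).comp (fderiv ℝ (gradient f) y)) y := by
    rw [hfderiv]
    exact (innerSL ℝ).hasFDerivAt.comp y h.hasFDerivAt
  rw [iteratedFDeriv_two_apply, hD2.fderiv]
  simp

end Gradient

theorem iteratedFDeriv_two_norm_sq_apply_of_eq_zero
    {E F : Type*} [NormedAddCommGroup E] [NormedSpace ℝ E]
    [NormedAddCommGroup F] [InnerProductSpace ℝ F] {g : E → F} {y : E}
    (hg : Differentiable ℝ g) (hg' : DifferentiableAt ℝ (fderiv ℝ g) y) (hy : g y = 0)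
    (v w : E) :
    iteratedFDeriv ℝ 2 (fun x => ‖g x‖ ^ 2) y ![v, w]
      = 2 * ⟪fderiv ℝ g y v, fderiv ℝ g y w⟫_ℝ := by
  have hfderiv : fderiv ℝ (fun x => ‖g x‖ ^ 2)
      = 2 • fun x => (innerSL ℝ (g x)).comp (fderiv ℝ g x) :=
    funext fun x => (hg x).hasFDerivAt.norm_sq.fderiv
  have hinner : HasFDerivAt (fun x => innerSL ℝ (g x)) ((innerSL ℝ).comp (fderiv ℝ g y)) y :=
    (innerSL ℝ).hasFDerivAt.comp y (hg y).hasFDerivAt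
  rw [iteratedFDeriv_two_apply, hfderiv,
    ((hinner.clm_comp hg'.hasFDerivAt).const_smul (2 : ℕ)).fderiv]
  simp [hy]

theorem gradient_squared_nondegenerate_general
    {ν : ℕ} (N : Set (EuclideanSpace ℝ (Fin ν)))
    (T : EuclideanSpace ℝ (Fin ν) → Submodule ℝ (EuclideanSpace ℝ (Fin ν)))
    (F : EuclideanSpace ℝ (Fin ν) → ℝ)
    (hF : ContDiff ℝ 3 F)
    (hFnonneg : ∀ z, 0 ≤ F z)
    (hF0 : ∀ y ∈ N, F y = 0)
    (hD2F : ∀ y ∈ N, ∀ v ∈ (T y)ᗮ, v ≠ 0 →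
      0 < iteratedFDeriv ℝ 2 F y ![v, v]) :
    (∀ y ∈ N, ‖gradient F y‖ ^ 2 = 0) ∧
    (∀ y ∈ N, ∀ v ∈ (T y)ᗮ, v ≠ 0 →
      0 < iteratedFDeriv ℝ 2 (fun y => ‖gradient F y‖ ^ 2) y ![v, v]) := by
  have hgrad : ContDiff ℝ 2 (gradient F) := hF.gradient (by norm_num)
  have hzero : ∀ y ∈ N, gradient F y = 0 := fun y hy =>
    IsLocalMin.gradient_eq_zero <| .of_forall fun z => hF0 y hy ▸ hFnonneg z
  refine ⟨fun y hy => by simp [hzero y hy], fun y hy v hv hv0 => ?_⟩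
  have hD : DifferentiableAt ℝ (fderiv ℝ (gradient F)) y :=
    (hgrad.fderiv_right (m := 1) (by norm_num)).differentiable one_ne_zero y
  have hpos := hD2F y hy v hv hv0
  rw [iteratedFDeriv_two_apply_eq_inner_fderiv_gradient (hgrad.differentiable two_ne_zero y)]
    at hpos
  have hne : fderiv ℝ (gradient F) y v ≠ 0 := by
    rintro h
    simp [h] at hpos
  rw [iteratedFDeriv_two_norm_sq_apply_of_eq_zero (hgrad.differentiable two_ne_zero) hD
    (hzero y hy)]
  exact mul_pos two_pos (real_inner_self_pos.2 hne)

/-- If `F : ℝ^ν → [0,∞)` is `C³`, vanishes on the compact submanifold `N` and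
satisfies `D²F(y)[v,v] > 0` for every `y ∈ N` and every nonzero normal vector
`v ∈ (T_y N)^⊥`, then `G(y) := |∇F(y)|²` also vanishes on `N` and satisfies
`D²G(y)[v,v] > 0` for every `y ∈ N` and nonzero normal `v`. -/
theorem gradient_squared_nondegenerate
    {ν : ℕ} (N : Set (EuclideanSpace ℝ (Fin ν)))
    (hN : IsCompact N)
    (T : EuclideanSpace ℝ (Fin ν) → Submodule ℝ (EuclideanSpace ℝ (Fin ν)))
    (F : EuclideanSpace ℝ (Fin ν) → ℝ)
    (hF : ContDiff ℝ 3 F)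
    (hFnonneg : ∀ z, 0 ≤ F z)
    (hF0 : ∀ y ∈ N, F y = 0)
    (hD2F : ∀ y ∈ N, ∀ v ∈ (T y)ᗮ, v ≠ 0 →
      0 < iteratedFDeriv ℝ 2 F y ![v, v]) :
    (∀ y ∈ N, ‖gradient F y‖ ^ 2 = 0) ∧
    (∀ y ∈ N, ∀ v ∈ (T y)ᗮ, v ≠ 0 →
      0 < iteratedFDeriv ℝ 2 (fun y => ‖gradient F y‖ ^ 2) y ![v, v]) :=
  gradient_squared_nondegenerate_general N T F hF hFnonneg hF0 hD2F
end

section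
/- Let N ⊂ ℝ^ν be a smooth compact embedded submanifold with tubular neighbourhood radius δ_N controlled by the norm of the second fundamental form. Then for every y with dist(y, N) < δ_N and every v ∈ ℝ^ν, one has (1 − dist(y,N)/δ_N)·|DΠ_N(y)[v]| ≤ |P⊤(Π_N(y))[v]|, where P⊤(x) denotes the orthogonal projection of ℝ^ν onto the tangent space T_x N. -/
open Metric

open RealInnerProductSpace
set_option maxHeartbeats 1000000

/-- Let `N ⊂ ℝ^ν` be a smooth compact embedded submanifold, with nearest point
projection `proj` smooth on the `δ_N`-tubular neighbourhood, where `1/δ_N`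
bounds the second fundamental form (encoded via `D²proj` on tangent vectors).
Then for every `y` with `dist(y,N) < δ_N` and every `v ∈ ℝ^ν`,
`(1 − dist(y,N)/δ_N)·|Dproj(y)[v]| ≤ |P⊤(proj y)[v]|`, where `P⊤(x)` is the
orthogonal projection onto the tangent space `T_x N`. -/
theorem deriv_retraction_le_tangent_projection
    {ν : ℕ} (N : Set (EuclideanSpace ℝ (Fin ν)))
    (hN : IsCompact N) (hNne : N.Nonempty)
    (T : EuclideanSpace ℝ (Fin ν) → Submodule ℝ (EuclideanSpace ℝ (Fin ν)))
    (proj : EuclideanSpace ℝ (Fin ν) → EuclideanSpace ℝ (Fin ν))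
    (δN : ℝ) (hδN : 0 < δN)
    (hprojsm : ContDiffOn ℝ (⊤ : ℕ∞) proj {z | infDist z N < δN})
    -- `proj` is the nearest point projection on the tubular neighbourhood:
    (hproj : ∀ z, infDist z N < δN → proj z ∈ N ∧ ‖z - proj z‖ = infDist z N)
    (hprojid : ∀ y ∈ N, proj y = y)
    -- `Dproj` takes values in the tangent space at the projected point:
    (htang : ∀ z, infDist z N < δN → ∀ v, fderiv ℝ proj z v ∈ T (proj z))
    -- `1/δ_N` bounds the second fundamental form `B_y(z,w) = −D²proj(y)[z,w]`:
    (hB : ∀ y ∈ N, ∀ z ∈ T y, ∀ w ∈ T y, ‖z‖ ≤ 1 → ‖w‖ ≤ 1 →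
      ‖iteratedFDeriv ℝ 2 proj y ![z, w]‖ ≤ 1 / δN) :
    ∀ y, infDist y N < δN → ∀ v,
      (1 - infDist y N / δN) * ‖fderiv ℝ proj y v‖ ≤
        ‖(Submodule.orthogonalProjectionOnto (T (proj y)) v : EuclideanSpace ℝ (Fin ν))‖ := by
  classical
  set U : Set (EuclideanSpace ℝ (Fin ν)) := {z | infDist z N < δN} with hUdef
  have hUopen : IsOpen U := isOpen_lt (continuous_infDist_pt N) continuous_const
  have hNU : N ⊆ U := fun x hx => by
    simp only [hUdef, Set.mem_setOf_eq, infDist_zero_of_mem hx]; exact hδN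
  have hdiffAt : ∀ z ∈ U, DifferentiableAt ℝ proj z := fun z hz =>
    (hprojsm.contDiffAt (hUopen.mem_nhds hz)).differentiableAt (by simp)
  have hf'cd : ContDiffOn ℝ (⊤ : ℕ∞) (fderiv ℝ proj) U :=
    hprojsm.fderiv_of_isOpen hUopen (by simp)
  have hf'diffAt : ∀ z ∈ U, DifferentiableAt ℝ (fderiv ℝ proj) z := fun z hz =>
    (hf'cd.contDiffAt (hUopen.mem_nhds hz)).differentiableAt (by simp)
  -- first variation: z - proj z is orthogonal to the range of Dproj(proj z)
  have horth : ∀ z ∈ U, ∀ u : EuclideanSpace ℝ (Fin ν), ⟪z - proj z, fderiv ℝ proj (proj z) u⟫ = 0 := by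
    intro z hz u
    have hxN : proj z ∈ N := (hproj z hz).1
    have hxU : proj z ∈ U := hNU hxN
    have h1 : HasDerivAt (fun t : ℝ => proj z + t • u) u 0 := by
      simpa using ((hasDerivAt_id (0:ℝ)).smul_const u).const_add (proj z)
    have hc : HasDerivAt (fun t : ℝ => proj (proj z + t • u)) (fderiv ℝ proj (proj z) u) 0 := by
      have h0 : proj z + (0:ℝ) • u = proj z := by simp
      have h2 : HasFDerivAt proj (fderiv ℝ proj (proj z)) (proj z + (0:ℝ) • u) := by
        rw [h0]; exact (hdiffAt _ hxU).hasFDerivAt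
      exact h2.comp_hasDerivAt 0 h1
    have hg : HasDerivAt (fun t : ℝ => ⟪z - proj (proj z + t • u), z - proj (proj z + t • u)⟫)
        (⟪z - proj (proj z + (0:ℝ) • u), -(fderiv ℝ proj (proj z) u)⟫
          + ⟪-(fderiv ℝ proj (proj z) u), z - proj (proj z + (0:ℝ) • u)⟫) 0 := by
      have hs : HasDerivAt (fun t : ℝ => z - proj (proj z + t • u))
          (-(fderiv ℝ proj (proj z) u)) 0 := by
        exact hc.const_sub z
      exact HasDerivAt.inner ℝ hs hs
    have hmin : IsLocalMin (fun t : ℝ => ⟪z - proj (proj z + t • u), z - proj (proj z + t • u)⟫) 0 := by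
      have hcont : Continuous fun t : ℝ => proj z + t • u := by continuity
      have hmem : {t : ℝ | proj z + t • u ∈ U} ∈ nhds (0:ℝ) := by
        refine (hUopen.preimage hcont).mem_nhds ?_
        simpa using hxU
      filter_upwards [hmem] with t ht
      have hN' : proj (proj z + t • u) ∈ N := (hproj _ ht).1
      have hle : ‖z - proj z‖ ≤ ‖z - proj (proj z + t • u)‖ := by
        rw [(hproj z hz).2]
        simpa [dist_eq_norm] using infDist_le_dist_of_mem (x := z) hN'
      have h00 : proj (proj z + (0:ℝ) • u) = proj z := by
        simp [hprojid _ hxN]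
      simp only [h00, real_inner_self_eq_norm_sq]
      have : (0:ℝ) ≤ ‖z - proj z‖ := norm_nonneg _
      nlinarith [norm_nonneg (z - proj (proj z + t • u))]
    have hz0 := hmin.hasDerivAt_eq_zero hg
    have h00 : proj (proj z + (0:ℝ) • u) = proj z := by simp [hprojid _ hxN]
    rw [h00] at hz0
    have := hz0
    rw [inner_neg_right, inner_neg_left] at this
    have hsymm : ⟪z - proj z, fderiv ℝ proj (proj z) u⟫
        = ⟪fderiv ℝ proj (proj z) u, z - proj z⟫ := real_inner_comm _ _
    linarith
  intro y hy v
  have hyU : y ∈ U := hy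
  set x := proj y with hxdef
  have hxN : x ∈ N := (hproj y hy).1
  have hxU : x ∈ U := hNU hxN
  have hψy : HasFDerivAt proj (fderiv ℝ proj y) y := (hdiffAt y hyU).hasFDerivAt
  have hψx : HasFDerivAt proj (fderiv ℝ proj x) x := (hdiffAt x hxU).hasFDerivAt
  set D := fderiv ℝ proj y with hDdef
  set Dx := fderiv ℝ proj x with hDxdef
  set S := fderiv ℝ (fderiv ℝ proj) x with hSdef
  have hSd : HasFDerivAt (fderiv ℝ proj) S x := (hf'diffAt x hxU).hasFDerivAt
  set w := D v with hwdef
  have hw_tang : w ∈ T x := htang y hy v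
  -- Dx w = w
  have hDxD : Dx.comp D = D := by
    have hcomp : HasFDerivAt (proj ∘ proj) (Dx.comp D) y := hψx.comp y hψy
    have heq : proj =ᶠ[nhds y] (proj ∘ proj) := by
      filter_upwards [hUopen.mem_nhds hyU] with z hz
      exact (hprojid (proj z) ((hproj z hz).1)).symm
    exact (hψy.unique (hcomp.congr_of_eventuallyEq heq)).symm
  have hDxw : Dx w = w := by
    have := congrFun (congrArg DFunLike.coe hDxD) v
    simpa [hwdef] using this
  -- differentiate the orthogonality identity
  have hA : HasFDerivAt (fun z => z - proj z) (ContinuousLinearMap.id ℝ (EuclideanSpace ℝ (Fin ν)) - D) y :=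
    (hasFDerivAt_id y).sub hψy
  have hBf : HasFDerivAt (fun z => fderiv ℝ proj (proj z) w)
      (((ContinuousLinearMap.apply ℝ (EuclideanSpace ℝ (Fin ν)) w).comp S).comp D) y := by
    have h1 : HasFDerivAt (fun z => fderiv ℝ proj (proj z)) (S.comp D) y := hSd.comp y hψy
    exact ((ContinuousLinearMap.apply ℝ (EuclideanSpace ℝ (Fin ν)) w).hasFDerivAt).comp y h1
  have hΦ : HasFDerivAt (fun z => ⟪z - proj z, fderiv ℝ proj (proj z) w⟫)
      ((fderivInnerCLM ℝ (y - x, fderiv ℝ proj x w)).comp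
        ((ContinuousLinearMap.id ℝ (EuclideanSpace ℝ (Fin ν)) - D).prod
          (((ContinuousLinearMap.apply ℝ (EuclideanSpace ℝ (Fin ν)) w).comp S).comp D))) y := by
    simpa [hxdef] using hA.inner ℝ hBf
  have hzero : HasFDerivAt (fun z => ⟪z - proj z, fderiv ℝ proj (proj z) w⟫)
      (0 : EuclideanSpace ℝ (Fin ν) →L[ℝ] ℝ) y := by
    have heq : (fun z => ⟪z - proj z, fderiv ℝ proj (proj z) w⟫) =ᶠ[nhds y]
        (fun _ => (0:ℝ)) := by
      filter_upwards [hUopen.mem_nhds hyU] with z hz using horth z hz w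
    exact (hasFDerivAt_const (0:ℝ) y).congr_of_eventuallyEq heq
  have hD0 := hΦ.unique hzero
  have key : ⟪y - x, S w w⟫ + ⟪v - w, Dx w⟫ = 0 := by
    have := congrFun (congrArg DFunLike.coe hD0) v
    simpa [fderivInnerCLM_apply, hwdef, hDxdef] using this
  rw [hDxw] at key
  -- ‖w‖² = ⟪v, w⟫ + ⟪y - x, S w w⟫
  have hkey : ‖w‖ ^ 2 = ⟪v, w⟫ + ⟪y - x, S w w⟫ := by
    have hsub : ⟪v - w, w⟫ = ⟪v, w⟫ - ⟪w, w⟫ := inner_sub_left v w w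
    have hww : ⟪w, w⟫ = ‖w‖ ^ 2 := real_inner_self_eq_norm_sq w
    linarith
  have hPv : ⟪v, w⟫ = ⟪(Submodule.orthogonalProjectionOnto (T x) v : EuclideanSpace ℝ (Fin ν)), w⟫ := by
    have h := Submodule.starProjection_inner_eq_zero (K := T x) v w hw_tang
    rw [Submodule.starProjection_apply] at h
    rw [inner_sub_left] at h
    linarith
  have hd : ‖y - x‖ = infDist y N := (hproj y hy).2
  have hdnn : (0:ℝ) ≤ infDist y N := infDist_nonneg
  rcases eq_or_ne w 0 with h0 | h0
  · rw [h0]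
    simp only [norm_zero, mul_zero]
    exact norm_nonneg _
  · have hcpos : 0 < ‖w‖ := norm_pos_iff.mpr h0
    -- second fundamental form bound
    have hSbound : ‖S w w‖ ≤ ‖w‖ ^ 2 / δN := by
      have hz' : ‖w‖⁻¹ • w ∈ T x := Submodule.smul_mem _ _ hw_tang
      have hn : ‖‖w‖⁻¹ • w‖ ≤ 1 := by
        rw [norm_smul, norm_inv, norm_norm, inv_mul_cancel₀ (ne_of_gt hcpos)]
      have h2 := hB x hxN _ hz' _ hz' hn hn
      rw [iteratedFDeriv_two_apply] at h2
      simp only [Matrix.cons_val_zero, Matrix.cons_val_one, Matrix.head_cons] at h2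
      rw [← hSdef] at h2
      have e : S (‖w‖⁻¹ • w) (‖w‖⁻¹ • w) = (‖w‖⁻¹ * ‖w‖⁻¹) • S w w := by
        simp only [map_smul, ContinuousLinearMap.smul_apply, smul_smul]
      rw [e, norm_smul] at h2
      have habs : ‖‖w‖⁻¹ * ‖w‖⁻¹‖ = ‖w‖⁻¹ * ‖w‖⁻¹ := by
        rw [Real.norm_eq_abs, abs_of_pos (by positivity)]
      rw [habs] at h2
      have hS1 : ‖S w w‖ = (‖w‖ * ‖w‖) * ((‖w‖⁻¹ * ‖w‖⁻¹) * ‖S w w‖) := by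
        field_simp
      have hrhs : ‖w‖ ^ 2 / δN = (‖w‖ * ‖w‖) * (1 / δN) := by
        field_simp
      rw [hS1, hrhs]
      exact mul_le_mul_of_nonneg_left h2 (by positivity)
    have h1 : ⟪v, w⟫ ≤ ‖(Submodule.orthogonalProjectionOnto (T x) v : EuclideanSpace ℝ (Fin ν))‖ * ‖w‖ := by
      rw [hPv]; exact real_inner_le_norm _ _
    have h2 : ⟪y - x, S w w⟫ ≤ infDist y N * (‖w‖ ^ 2 / δN) := by
      calc ⟪y - x, S w w⟫ ≤ ‖y - x‖ * ‖S w w‖ := real_inner_le_norm _ _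
        _ ≤ infDist y N * (‖w‖ ^ 2 / δN) := by
            rw [hd]
            exact mul_le_mul_of_nonneg_left hSbound hdnn
    -- conclude
    have hineq : ‖w‖ ^ 2 ≤ ‖(Submodule.orthogonalProjectionOnto (T x) v : EuclideanSpace ℝ (Fin ν))‖ * ‖w‖
        + infDist y N * (‖w‖ ^ 2 / δN) :=
      calc ‖w‖ ^ 2 = ⟪v, w⟫ + ⟪y - x, S w w⟫ := hkey
        _ ≤ _ := add_le_add h1 h2
    have hδ' : δN ≠ 0 := ne_of_gt hδN
    have h3 : (1 - infDist y N / δN) * ‖w‖ * ‖w‖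
        ≤ ‖(Submodule.orthogonalProjectionOnto (T x) v : EuclideanSpace ℝ (Fin ν))‖ * ‖w‖ := by
      have heq : (1 - infDist y N / δN) * ‖w‖ * ‖w‖
          = ‖w‖ ^ 2 - infDist y N * (‖w‖ ^ 2 / δN) := by
        field_simp
      rw [heq]; linarith
    exact le_of_mul_le_mul_right h3 hcpos
end

section
/- Let N ⊂ ℝ^ν be a smooth compact submanifold with smooth nearest point projection Π_N on a tubular neighbourhood, and let F ∈ C³ on this neighbourhood with F⁻¹({0}) = N and satisfying the quadratic non-degeneracy (m_F/2)·dist(z,N)² ≤ F(z) ≤ (M_F/2)·dist(z,N)² near N. Then there exist constants C > 0 and δ > 0 such that for every z with dist(z, N) < δ, |DΠ_N(z)[∇F(z)]| ≤ C · F(z). -/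
open Metric
open scoped RealInnerProductSpace

set_option maxHeartbeats 2000000 in
/-- Let `N ⊂ ℝ^ν` be a smooth compact submanifold with smooth nearest point
projection `proj` on the `δ_N`-tubular neighbourhood, and let `F` be `C³` on
this neighbourhood with zero set `N` and satisfying the quadratic
non-degeneracy `(m/2)·dist(z,N)² ≤ F(z) ≤ (M/2)·dist(z,N)²` there. Then there
are `C > 0` and `δ > 0` such that `|Dproj(z)[∇F(z)]| ≤ C·F(z)` whenever
`dist(z,N) < δ`. -/
theorem deriv_proj_gradient_le_potential
    {ν : ℕ} (N : Set (EuclideanSpace ℝ (Fin ν)))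
    (hN : IsCompact N) (hNne : N.Nonempty)
    (proj : EuclideanSpace ℝ (Fin ν) → EuclideanSpace ℝ (Fin ν))
    (F : EuclideanSpace ℝ (Fin ν) → ℝ)
    (δN : ℝ) (hδN : 0 < δN)
    (hprojsm : ContDiffOn ℝ (⊤ : ℕ∞) proj {z | infDist z N < δN})
    (hproj : ∀ z, infDist z N < δN → proj z ∈ N ∧ ‖z - proj z‖ = infDist z N)
    (hF : ContDiffOn ℝ 3 F {z | infDist z N < δN})
    (hFnonneg : ∀ z, 0 ≤ F z)
    (hF0 : ∀ z, infDist z N < δN → (F z = 0 ↔ z ∈ N))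
    (m M : ℝ) (hm : 0 < m) (hM : 0 < M)
    (hquad : ∀ z, infDist z N < δN →
      m / 2 * (infDist z N) ^ 2 ≤ F z ∧ F z ≤ M / 2 * (infDist z N) ^ 2) :
    ∃ C > (0 : ℝ), ∃ δ > (0 : ℝ), δ ≤ δN ∧
      ∀ z, infDist z N < δ →
        ‖fderiv ℝ proj z (gradient F z)‖ ≤ C * F z := by
  classical
  set U : Set (EuclideanSpace ℝ (Fin ν)) := {z | infDist z N < δN} with hUdef
  have hUopen : IsOpen U := isOpen_lt (continuous_infDist_pt N) continuous_const
  have hNU : N ⊆ U := by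
    intro p hp
    simp only [hUdef, Set.mem_setOf_eq, infDist_zero_of_mem hp]
    exact hδN
  have hprojN : ∀ p ∈ N, proj p = p := by
    intro p hp
    have h := (hproj p (hNU hp)).2
    rw [infDist_zero_of_mem hp, norm_eq_zero, sub_eq_zero] at h
    exact h.symm
  -- abbreviations for derivatives
  set F1 := fderiv ℝ F with hF1def
  set F2 := fderiv ℝ F1 with hF2def
  set P1 := fderiv ℝ proj with hP1def
  set P2 := fderiv ℝ P1 with hP2def
  have hproj3 : ContDiffOn ℝ 3 proj U := hprojsm.of_le (WithTop.coe_le_coe.mpr le_top)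
  have hF1sm : ContDiffOn ℝ 2 F1 U := hF.fderiv_of_isOpen hUopen (by norm_num)
  have hF2sm : ContDiffOn ℝ 1 F2 U := hF1sm.fderiv_of_isOpen hUopen (by norm_num)
  have hP1sm : ContDiffOn ℝ 2 P1 U := hproj3.fderiv_of_isOpen hUopen (by norm_num)
  have hP2sm : ContDiffOn ℝ 1 P2 U := hP1sm.fderiv_of_isOpen hUopen (by norm_num)
  -- differentiability
  have hFd : ∀ z ∈ U, DifferentiableAt ℝ F z := fun z hz =>
    (hF.contDiffAt (hUopen.mem_nhds hz)).differentiableAt (by norm_num)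
  have hF1d : ∀ z ∈ U, HasFDerivAt F1 (F2 z) z := fun z hz =>
    ((hF1sm.contDiffAt (hUopen.mem_nhds hz)).differentiableAt (by norm_num)).hasFDerivAt
  have hprojd : ∀ z ∈ U, HasFDerivAt proj (P1 z) z := fun z hz =>
    ((hproj3.contDiffAt (hUopen.mem_nhds hz)).differentiableAt (by norm_num)).hasFDerivAt
  have hP1d : ∀ z ∈ U, HasFDerivAt P1 (P2 z) z := fun z hz =>
    ((hP1sm.contDiffAt (hUopen.mem_nhds hz)).differentiableAt (by norm_num)).hasFDerivAt
  -- gradient F vanishes on N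
  have hF1N : ∀ p ∈ N, F1 p = 0 := by
    intro p hp
    have hmin : IsLocalMin F p := by
      apply Filter.Eventually.of_forall
      intro z
      rw [(hF0 p (hNU hp)).mpr hp]
      exact hFnonneg z
    exact hmin.fderiv_eq_zero
  -- second derivative symmetry on U
  have hsymm : ∀ z ∈ U, ∀ v w, F2 z v w = F2 z w v := by
    intro z hz v w
    refine second_derivative_symmetric_of_eventually (f := F) ?_ (hF1d z hz) v w
    filter_upwards [hUopen.mem_nhds hz] with y hy
    exact (hFd y hy).hasFDerivAt
  -- key identity: F2 p ∘ P1 p = 0 on N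
  have hZ : ∀ p ∈ N, ∀ v, F2 p (P1 p v) = 0 := by
    intro p hp v
    have hcomp : fderiv ℝ (F1 ∘ proj) p = (F2 p).comp (P1 p) := by
      rw [fderiv_comp p (by rw [hprojN p hp]; exact (hF1d p (hNU hp)).differentiableAt)
        (hprojd p (hNU hp)).differentiableAt, hprojN p hp]
    have heq : (F1 ∘ proj) =ᶠ[nhds p] (fun _ => (0 : EuclideanSpace ℝ (Fin ν) →L[ℝ] ℝ)) := by
      filter_upwards [hUopen.mem_nhds (hNU hp)] with y hy
      exact hF1N (proj y) (hproj y hy).1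
    have h0 : fderiv ℝ (F1 ∘ proj) p = 0 := by
      rw [heq.fderiv_eq, fderiv_const_apply]
    have : (F2 p).comp (P1 p) = 0 := by rw [← hcomp, h0]
    have := congrFun (congrArg DFunLike.coe this) v
    simpa using this
  -- orthogonality: z - proj z ⟂ range (P1 z)
  have horth : ∀ z ∈ U, ∀ u, ⟪z - proj z, P1 z u⟫ = (0 : ℝ) := by
    intro z hz u
    set c : ℝ → EuclideanSpace ℝ (Fin ν) := fun t => z - proj (z + t • u) with hcdef
    have hline : HasDerivAt (fun t : ℝ => z + t • u) u 0 := by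
      simpa using ((hasDerivAt_id (0 : ℝ)).smul_const u).const_add z
    have hproj' : HasFDerivAt proj (P1 z) (z + (0 : ℝ) • u) := by
      rw [show z + (0 : ℝ) • u = z by simp]
      exact hprojd z hz
    have hcomp : HasDerivAt (fun t : ℝ => proj (z + t • u)) (P1 z u) 0 :=
      hproj'.comp_hasDerivAt 0 hline
    have hc' : HasDerivAt c (-(P1 z u)) 0 := hcomp.const_sub z
    have hφ : HasDerivAt (fun t => ⟪c t, c t⟫)
        (⟪c 0, -(P1 z u)⟫ + ⟪-(P1 z u), c 0⟫) 0 := HasDerivAt.inner ℝ hc' hc'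
    have hT : Filter.Tendsto (fun t : ℝ => z + t • u) (nhds 0) (nhds z) := by
      have hcont : Continuous (fun t : ℝ => z + t • u) :=
        continuous_const.add (continuous_id.smul continuous_const)
      have := hcont.tendsto 0
      simpa using this
    have hmin : IsLocalMin (fun t => ⟪c t, c t⟫) 0 := by
      filter_upwards [hT (hUopen.mem_nhds hz)] with t ht
      simp only [hcdef, real_inner_self_eq_norm_sq]
      have h1 : infDist z N ≤ ‖z - proj (z + t • u)‖ := by
        rw [← dist_eq_norm]
        exact infDist_le_dist_of_mem (hproj _ ht).1
      have h2 : ‖z - proj (z + (0 : ℝ) • u)‖ = infDist z N := by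
        rw [show z + (0 : ℝ) • u = z by simp]
        exact (hproj z hz).2
      rw [h2]
      exact pow_le_pow_left₀ infDist_nonneg h1 2
    have hder := hmin.deriv_eq_zero
    rw [hφ.deriv] at hder
    have hc0 : c 0 = z - proj z := by
      simp only [hcdef]
      rw [show z + (0 : ℝ) • u = z by simp]
    rw [hc0, inner_neg_right, inner_neg_left, real_inner_comm (P1 z u)] at hder
    rw [real_inner_comm]
    linarith
  -- self-adjointness of P1 p on N
  have haux : ∀ p ∈ N, ∀ u v, ⟪v, P1 p u⟫ = ⟪P1 p v, P1 p u⟫ := by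
    intro p hp u v
    have hpU := hNU hp
    have hA : HasFDerivAt (fun z => z - proj z)
        (ContinuousLinearMap.id ℝ _ - P1 p) p := (hasFDerivAt_id p).sub (hprojd p hpU)
    have hB : HasFDerivAt (fun z => P1 z u)
        ((P1 p).comp (0 : _ →L[ℝ] _) + (P2 p).flip u) p :=
      (hP1d p hpU).clm_apply (hasFDerivAt_const u p)
    have hg := HasFDerivAt.inner ℝ hA hB
    have hg0 : fderiv ℝ (fun z => ⟪z - proj z, P1 z u⟫) p = 0 := by
      have hev : (fun z => ⟪z - proj z, P1 z u⟫) =ᶠ[nhds p] (fun _ => (0 : ℝ)) := by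
        filter_upwards [hUopen.mem_nhds hpU] with y hy
        exact horth y hy u
      rw [hev.fderiv_eq, fderiv_const_apply]
    have hD := hg.fderiv
    rw [hg0] at hD
    have hv := congrFun (congrArg DFunLike.coe hD) v
    simp only [ContinuousLinearMap.zero_apply, ContinuousLinearMap.coe_comp',
      Function.comp_apply, ContinuousLinearMap.prod_apply, fderivInnerCLM_apply,
      ContinuousLinearMap.add_apply, ContinuousLinearMap.flip_apply,
      ContinuousLinearMap.sub_apply, ContinuousLinearMap.coe_id', id_eq,
      hprojN p hp, sub_self, inner_zero_left, zero_add] at hv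
    rw [inner_sub_left] at hv
    linarith
  have hsa : ∀ p ∈ N, ∀ u v, ⟪P1 p u, v⟫ = ⟪u, P1 p v⟫ := by
    intro p hp u v
    calc ⟪P1 p u, v⟫ = ⟪v, P1 p u⟫ := real_inner_comm _ _
      _ = ⟪P1 p v, P1 p u⟫ := haux p hp u v
      _ = ⟪P1 p u, P1 p v⟫ := real_inner_comm _ _
      _ = ⟪u, P1 p v⟫ := (haux p hp v u).symm
  -- idempotency of P1 p on N
  have hidem : ∀ p ∈ N, ∀ u, P1 p (P1 p u) = P1 p u := by
    intro p hp u
    have hpU := hNU hp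
    have hcomp : fderiv ℝ (proj ∘ proj) p = (P1 p).comp (P1 p) := by
      rw [fderiv_comp p (by rw [hprojN p hp]; exact (hprojd p hpU).differentiableAt)
        (hprojd p hpU).differentiableAt, hprojN p hp]
    have hev : (proj ∘ proj) =ᶠ[nhds p] proj := by
      filter_upwards [hUopen.mem_nhds hpU] with y hy
      exact hprojN (proj y) (hproj y hy).1
    have h2 : (P1 p).comp (P1 p) = P1 p := by rw [← hcomp]; exact hev.fderiv_eq
    have := congrFun (congrArg DFunLike.coe h2) u
    simpa using this
  -- the compact tube
  set K : Set (EuclideanSpace ℝ (Fin ν)) := {x | infDist x N ≤ δN / 2} with hKdef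
  have hKU : K ⊆ U := by
    intro x hx
    simp only [hKdef, Set.mem_setOf_eq] at hx
    simp only [hUdef, Set.mem_setOf_eq]
    linarith
  have hNK : N ⊆ K := fun p hp => by
    simp only [hKdef, Set.mem_setOf_eq, infDist_zero_of_mem hp]; positivity
  have hKcpt : IsCompact K := by
    obtain ⟨x₀, hx₀⟩ := id hNne
    obtain ⟨R, hR⟩ := hN.isBounded.subset_closedBall x₀
    refine Metric.isCompact_of_isClosed_isBounded
      (isClosed_le (continuous_infDist_pt N) continuous_const) ?_
    refine Metric.isBounded_closedBall (x := x₀) (r := δN / 2 + 1 + R) |>.subset ?_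
    intro x hx
    obtain ⟨y, hyN, hy⟩ := (infDist_lt_iff hNne).mp
      (lt_of_le_of_lt hx (by linarith : δN / 2 < δN / 2 + 1))
    have hyb := hR hyN
    simp only [Metric.mem_closedBall] at hyb ⊢
    calc dist x x₀ ≤ dist x y + dist y x₀ := dist_triangle x y x₀
      _ ≤ δN / 2 + 1 + R := by linarith
  -- bounds on K
  obtain ⟨A2, hA2⟩ : ∃ C, ∀ x ∈ K, ‖F2 x‖ ≤ C :=
    hKcpt.exists_bound_of_continuousOn (f := F2) ((hF2sm.continuousOn).mono hKU)
  obtain ⟨A3, hA3⟩ :=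
    hKcpt.exists_bound_of_continuousOn
      ((hF2sm.continuousOn_fderiv_of_isOpen hUopen le_rfl).mono hKU)
  obtain ⟨B2, hB2⟩ : ∃ C, ∀ x ∈ K, ‖P2 x‖ ≤ C :=
    hKcpt.exists_bound_of_continuousOn (f := P2) ((hP2sm.continuousOn).mono hKU)
  have hA2nn : 0 ≤ A2 := le_trans (norm_nonneg (F2 _)) (hA2 _ (hNK hNne.choose_spec))
  have hA3nn : 0 ≤ A3 := le_trans (norm_nonneg _) (hA3 _ (hNK hNne.choose_spec))
  have hB2nn : 0 ≤ B2 := le_trans (norm_nonneg (P2 _)) (hB2 _ (hNK hNne.choose_spec))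
  have hF2d : ∀ y ∈ U, DifferentiableAt ℝ F2 y := fun y hy =>
    (hF2sm.contDiffAt (hUopen.mem_nhds hy)).differentiableAt one_ne_zero
  refine ⟨2 * (A2 * B2 + A3 + 1) / m, by positivity, δN / 2, by positivity, by linarith, ?_⟩
  intro z hz
  set d := infDist z N with hddef
  have hd0 : 0 ≤ d := infDist_nonneg
  have hzU : z ∈ U := by
    simp only [hUdef, Set.mem_setOf_eq]; linarith
  set p := proj z with hpdef
  have hpN : p ∈ N := (hproj z hzU).1
  have hpU : p ∈ U := hNU hpN
  have hdist : ‖z - p‖ = d := (hproj z hzU).2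
  -- the segment from p to z stays in the compact tube K
  have hxp : ∀ x ∈ segment ℝ p z, ‖x - p‖ ≤ d := by
    intro x hx
    obtain ⟨a, b, ha, hb, hab, rfl⟩ := hx
    have hax : a = 1 - b := by linarith
    have h1 : a • p + b • z - p = b • (z - p) := by rw [hax]; module
    rw [h1, norm_smul, Real.norm_eq_abs, abs_of_nonneg hb, ← hdist]
    have hb1 : b ≤ 1 := by linarith
    nlinarith [norm_nonneg (z - p)]
  have hseg : segment ℝ p z ⊆ K := by
    intro x hx
    have h1 : infDist x N ≤ dist x p := infDist_le_dist_of_mem hpN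
    rw [dist_eq_norm] at h1
    simp only [hKdef, Set.mem_setOf_eq]
    have := hxp x hx
    linarith
  have hsegU : ∀ x ∈ segment ℝ p z, x ∈ U := fun x hx => hKU (hseg hx)
  have hpz : p ∈ segment ℝ p z := left_mem_segment ℝ p z
  have hzz : z ∈ segment ℝ p z := right_mem_segment ℝ p z
  -- the gradient is small: ‖F1 z‖ ≤ A2 * d
  have hF1z : ‖F1 z‖ ≤ A2 * d := by
    have h := (convex_segment p z).norm_image_sub_le_of_norm_fderiv_le
      (f := F1) (fun x hx => (hF1d x (hsegU x hx)).differentiableAt)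
      (fun x hx => by
        rw [(hF1d x (hsegU x hx)).fderiv]
        exact hA2 x (hseg hx)) hpz hzz
    rw [hF1N p hpN, sub_zero, hdist] at h
    exact h
  -- Taylor estimate: ‖F1 z - F2 p (z - p)‖ ≤ A3 * d * d
  have hTaylor : ‖F1 z - F2 p (z - p)‖ ≤ A3 * d * d := by
    have hbound : ∀ x ∈ segment ℝ p z, ‖F2 x - F2 p‖ ≤ A3 * d := by
      intro x hx
      have h := (convex_segment p z).norm_image_sub_le_of_norm_fderiv_le
        (f := F2) (fun y hy => hF2d y (hsegU y hy))
        (fun y hy => hA3 y (hseg hy)) hpz hx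
      have := hxp x hx
      calc ‖F2 x - F2 p‖ ≤ A3 * ‖x - p‖ := h
        _ ≤ A3 * d := by nlinarith
    have hG : ∀ x ∈ segment ℝ p z,
        HasFDerivWithinAt (fun y => F1 y - F2 p y) (F2 x - F2 p) (segment ℝ p z) x :=
      fun x hx => ((hF1d x (hsegU x hx)).sub ((F2 p).hasFDerivAt)).hasFDerivWithinAt
    have h := (convex_segment p z).norm_image_sub_le_of_norm_hasFDerivWithin_le
      hG hbound hpz hzz
    have heq : (F1 z - F2 p z) - (F1 p - F2 p p) = F1 z - F2 p (z - p) := by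
      rw [hF1N p hpN, map_sub]
      abel
    rw [heq, hdist] at h
    exact h
  -- bound the tangential part
  set w' := P1 p (gradient F z) with hw'def
  have hw'fix : P1 p w' = w' := hidem p hpN _
  have hgrad : ∀ v, ⟪gradient F z, v⟫ = F1 z v := fun v =>
    InnerProductSpace.toDual_symm_apply
  have hkey : ‖w'‖ * ‖w'‖ ≤ (A3 * d * d) * ‖w'‖ := by
    have h1 : (⟪w', w'⟫ : ℝ) = F1 z w' := by
      calc (⟪w', w'⟫ : ℝ) = ⟪P1 p (gradient F z), w'⟫ := rfl
        _ = ⟪gradient F z, P1 p w'⟫ := hsa p hpN _ _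
        _ = ⟪gradient F z, w'⟫ := by rw [hw'fix]
        _ = F1 z w' := hgrad w'
    have h2 : F2 p (z - p) w' = 0 := by
      rw [hsymm p hpU (z - p) w', hw'def]
      rw [hZ p hpN (gradient F z)]
      rfl
    have h3 : F1 z w' = (F1 z - F2 p (z - p)) w' := by
      rw [ContinuousLinearMap.sub_apply, h2, sub_zero]
    have h4 : |F1 z w'| ≤ (A3 * d * d) * ‖w'‖ := by
      rw [h3]
      calc |(F1 z - F2 p (z - p)) w'| ≤ ‖F1 z - F2 p (z - p)‖ * ‖w'‖ :=
            (F1 z - F2 p (z - p)).le_opNorm w'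
        _ ≤ (A3 * d * d) * ‖w'‖ := by
            exact mul_le_mul_of_nonneg_right hTaylor (norm_nonneg _)
    have h5 : ‖w'‖ * ‖w'‖ = F1 z w' := by
      rw [← h1, real_inner_self_eq_norm_mul_norm]
    rw [h5]
    exact le_trans (le_abs_self _) h4
  have hw'le : ‖w'‖ ≤ A3 * d * d := by
    rcases eq_or_lt_of_le (norm_nonneg w') with h | h
    · rw [← h]; positivity
    · exact le_of_mul_le_mul_right hkey h
  -- Lipschitz bound on P1
  have hP1lip : ‖P1 z - P1 p‖ ≤ B2 * d := by
    have h := (convex_segment p z).norm_image_sub_le_of_norm_fderiv_le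
      (f := P1) (fun x hx => (hP1d x (hsegU x hx)).differentiableAt)
      (fun x hx => by
        rw [(hP1d x (hsegU x hx)).fderiv]
        exact hB2 x (hseg hx)) hpz hzz
    rw [hdist] at h
    exact h
  -- norm of the gradient
  have hgradnorm : ‖gradient F z‖ ≤ A2 * d := by
    have : ‖gradient F z‖ = ‖F1 z‖ := LinearIsometryEquiv.norm_map _ _
    rw [this]
    exact hF1z
  -- assemble
  have hfinal : ‖P1 z (gradient F z)‖ ≤ (A2 * B2 + A3) * (d * d) := by
    have hsplit : P1 z (gradient F z) = (P1 z - P1 p) (gradient F z) + w' := by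
      rw [ContinuousLinearMap.sub_apply, hw'def]
      abel
    rw [hsplit]
    calc ‖(P1 z - P1 p) (gradient F z) + w'‖
        ≤ ‖(P1 z - P1 p) (gradient F z)‖ + ‖w'‖ := norm_add_le _ _
      _ ≤ ‖P1 z - P1 p‖ * ‖gradient F z‖ + (A3 * d * d) := by
          exact add_le_add ((P1 z - P1 p).le_opNorm _) hw'le
      _ ≤ (B2 * d) * (A2 * d) + A3 * d * d := by
          have h1 : ‖P1 z - P1 p‖ * ‖gradient F z‖ ≤ (B2 * d) * (A2 * d) :=
            mul_le_mul hP1lip hgradnorm (norm_nonneg _) (by positivity)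
          linarith
      _ = (A2 * B2 + A3) * (d * d) := by ring
  have hFz : m / 2 * d ^ 2 ≤ F z := (hquad z hzU).1
  have hCle : (A2 * B2 + A3) * (d * d) ≤ 2 * (A2 * B2 + A3 + 1) / m * F z := by
    have h1 : (A2 * B2 + A3) * (d * d) ≤ (A2 * B2 + A3 + 1) * d ^ 2 := by nlinarith
    have h2 : (A2 * B2 + A3 + 1) * d ^ 2 = 2 * (A2 * B2 + A3 + 1) / m * (m / 2 * d ^ 2) := by
      field_simp
    have h3 : 2 * (A2 * B2 + A3 + 1) / m * (m / 2 * d ^ 2)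
        ≤ 2 * (A2 * B2 + A3 + 1) / m * F z :=
      mul_le_mul_of_nonneg_left hFz (by positivity)
    linarith
  exact le_trans hfinal hCle
end

section
/- Let N ⊂ ℝ^ν be a smooth compact embedded submanifold with smooth nearest point projection Π_N. For every y ∈ N, h ∈ ℝ^ν and w ∈ T_y N, one has w · D²Π_N(y)[h,h] = w · D²Π_N(y)[h, DΠ_N(y)[h]] + DΠ_N(y)[h] · D²Π_N(y)[h, w]. -/
open Metric

open scoped RealInnerProductSpace

set_option maxHeartbeats 2000000 in
/-- Geometric identity for the second derivative of the nearest point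
projection `proj` onto a smooth compact embedded submanifold `N ⊂ ℝ^ν`: for
`y ∈ N`, `h ∈ ℝ^ν` and a tangent vector `w ∈ T_y N`,
`w · D²proj(y)[h,h] = w · D²proj(y)[h, Dproj(y)[h]] + Dproj(y)[h] · D²proj(y)[h, w]`. -/
theorem second_deriv_projection_identity
    {ν : ℕ} (N : Set (EuclideanSpace ℝ (Fin ν)))
    (hN : IsCompact N) (hNne : N.Nonempty)
    (T : EuclideanSpace ℝ (Fin ν) → Submodule ℝ (EuclideanSpace ℝ (Fin ν)))
    (proj : EuclideanSpace ℝ (Fin ν) → EuclideanSpace ℝ (Fin ν))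
    (U : Set (EuclideanSpace ℝ (Fin ν))) (hU : IsOpen U) (hNU : N ⊆ U)
    (hprojsm : ContDiffOn ℝ (⊤ : ℕ∞) proj U)
    -- `proj` is the nearest point projection on `U`:
    (hproj : ∀ z ∈ U, proj z ∈ N ∧ ‖z - proj z‖ = infDist z N)
    -- at `y ∈ N`, `Dproj(y)` is the orthogonal projection onto `T_y N`:
    (hprojT : ∀ y ∈ N, ∀ v, fderiv ℝ proj y v ∈ T y ∧
      v - fderiv ℝ proj y v ∈ (T y)ᗮ) :
    ∀ y ∈ N, ∀ h : EuclideanSpace ℝ (Fin ν), ∀ w ∈ T y,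
      (inner ℝ w (iteratedFDeriv ℝ 2 proj y ![h, h]) : ℝ)
        = (inner ℝ w (iteratedFDeriv ℝ 2 proj y ![h, fderiv ℝ proj y h]) : ℝ)
          + (inner ℝ (fderiv ℝ proj y h) (iteratedFDeriv ℝ 2 proj y ![h, w]) : ℝ) := by
  intro y hy h w hw
  have hyU : y ∈ U := hNU hy
  -- differentiability facts
  have dAt : ∀ x ∈ U, DifferentiableAt ℝ proj x := fun x hx =>
    ((hprojsm x hx).contDiffAt (hU.mem_nhds hx)).differentiableAt (by simp)
  have hA : ContDiffOn ℝ (⊤ : ℕ∞) (fderiv ℝ proj) U := hprojsm.fderiv_of_isOpen hU (by simp)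
  have dAAt : ∀ x ∈ U, DifferentiableAt ℝ (fderiv ℝ proj) x := fun x hx =>
    ((hA x hx).contDiffAt (hU.mem_nhds hx)).differentiableAt (by simp)
  -- proj is the identity on N
  have hproj0 : ∀ z ∈ N, proj z = z := by
    intro z hz
    have h2 := (hproj z (hNU hz)).2
    rw [infDist_zero_of_mem hz, norm_eq_zero, sub_eq_zero] at h2
    exact h2.symm
  -- orthogonality helper
  have horth : ∀ z : EuclideanSpace ℝ (Fin ν), ∀ t ∈ T z, ∀ n ∈ (T z)ᗮ, ⟪t, n⟫ = 0 :=
    fun z t ht n hn => (Submodule.mem_orthogonal _ _).1 hn t ht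
  -- the derivative of proj at points of N is the identity on T z
  have hPid : ∀ z ∈ N, ∀ t ∈ T z, fderiv ℝ proj z t = t := by
    intro z hz t ht
    have h1 := (hprojT z hz t).2
    have h2 : t - fderiv ℝ proj z t ∈ T z := Submodule.sub_mem _ ht (hprojT z hz t).1
    have h3 : t - fderiv ℝ proj z t = 0 := by
      have := horth z _ h2 _ h1
      exact inner_self_eq_zero.1 this
    have := sub_eq_zero.1 h3
    exact this.symm
  -- the derivative of proj at points of N kills (T z)ᗮ
  have hPkill : ∀ z ∈ N, ∀ n ∈ (T z)ᗮ, fderiv ℝ proj z n = 0 := by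
    intro z hz n hn
    have h1 : (⟪fderiv ℝ proj z n, fderiv ℝ proj z n⟫ : ℝ)
        = ⟪fderiv ℝ proj z n, n⟫ - ⟪fderiv ℝ proj z n, n - fderiv ℝ proj z n⟫ := by
      rw [inner_sub_right]; ring
    rw [horth z _ (hprojT z hz n).1 _ hn,
      horth z _ (hprojT z hz n).1 _ (hprojT z hz n).2] at h1
    exact inner_self_eq_zero.1 (by rw [h1]; ring)
  -- the derivative of proj at points of N is self-adjoint
  have hPsa : ∀ z ∈ N, ∀ a b : EuclideanSpace ℝ (Fin ν),
      (⟪fderiv ℝ proj z a, b⟫ : ℝ) = ⟪a, fderiv ℝ proj z b⟫ := by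
    intro z hz a b
    have e1 : (⟪fderiv ℝ proj z a, b⟫ : ℝ)
        = ⟪fderiv ℝ proj z a, fderiv ℝ proj z b⟫
          + ⟪fderiv ℝ proj z a, b - fderiv ℝ proj z b⟫ := by
      rw [← inner_add_right]; congr 1; abel
    have e2 : (⟪a, fderiv ℝ proj z b⟫ : ℝ)
        = ⟪fderiv ℝ proj z a, fderiv ℝ proj z b⟫
          + ⟪a - fderiv ℝ proj z a, fderiv ℝ proj z b⟫ := by
      rw [← inner_add_left]; congr 1; abel
    have h5 : (⟪a - fderiv ℝ proj z a, fderiv ℝ proj z b⟫ : ℝ) = 0 := by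
      rw [real_inner_comm]
      exact horth z _ (hprojT z hz b).1 _ (hprojT z hz a).2
    rw [e1, e2, horth z _ (hprojT z hz a).1 _ (hprojT z hz b).2, h5]
  -- chain rule identity : A (proj x) ∘ A x = A x on U
  have hAA : ∀ x ∈ U, ∀ v, fderiv ℝ proj (proj x) (fderiv ℝ proj x v)
      = fderiv ℝ proj x v := by
    intro x hx v
    have hpx : proj x ∈ N := (hproj x hx).1
    have heq : (proj ∘ proj) =ᶠ[nhds x] proj := by
      filter_upwards [hU.mem_nhds hx] with z hz
      exact hproj0 _ (hproj z hz).1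
    have hcomp : fderiv ℝ (proj ∘ proj) x
        = (fderiv ℝ proj (proj x)).comp (fderiv ℝ proj x) :=
      ((dAt (proj x) (hNU hpx)).hasFDerivAt.comp x (dAt x hx).hasFDerivAt).fderiv
    have h2 : fderiv ℝ (proj ∘ proj) x = fderiv ℝ proj x := heq.fderiv_eq
    rw [hcomp] at h2
    calc fderiv ℝ proj (proj x) (fderiv ℝ proj x v)
        = ((fderiv ℝ proj (proj x)).comp (fderiv ℝ proj x)) v := rfl
      _ = fderiv ℝ proj x v := by rw [h2]
  -- the derivative of proj maps into the tangent space at proj x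
  have hrange : ∀ x ∈ U, ∀ v, fderiv ℝ proj x v ∈ T (proj x) := by
    intro x hx v
    rw [← hAA x hx v]
    exact (hprojT _ (hproj x hx).1 _).1
  -- first variation : x - proj x is orthogonal to T (proj x)
  have horthV : ∀ x ∈ U, ∀ t ∈ T (proj x), (⟪x - proj x, t⟫ : ℝ) = 0 := by
    intro x hx t ht
    have hpN : proj x ∈ N := (hproj x hx).1
    have hpU : proj x ∈ U := hNU hpN
    have hmin : IsLocalMin (fun u => (⟪x - proj u, x - proj u⟫ : ℝ)) (proj x) := by
      have : ∀ᶠ z in nhds (proj x),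
          (⟪x - proj (proj x), x - proj (proj x)⟫ : ℝ) ≤ ⟪x - proj z, x - proj z⟫ := by
        filter_upwards [hU.mem_nhds hpU] with z hz
        rw [real_inner_self_eq_norm_sq, real_inner_self_eq_norm_sq, hproj0 _ hpN]
        apply pow_le_pow_left₀ (norm_nonneg _)
        rw [(hproj x hx).2, ← dist_eq_norm]
        exact infDist_le_dist_of_mem (hproj z hz).1
      exact this
    have hzero := hmin.fderiv_eq_zero
    have hd : HasFDerivAt (fun u => (⟪x - proj u, x - proj u⟫ : ℝ))
        ((fderivInnerCLM ℝ (x - proj (proj x), x - proj (proj x))).comp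
          ((-fderiv ℝ proj (proj x)).prod (-fderiv ℝ proj (proj x)))) (proj x) :=
      HasFDerivAt.inner ℝ ((dAt _ hpU).hasFDerivAt.const_sub x)
        ((dAt _ hpU).hasFDerivAt.const_sub x)
    have h0 : (⟪x - proj x, fderiv ℝ proj (proj x) t⟫ : ℝ) = 0 := by
      have := hd.fderiv
      rw [hzero] at this
      have h3 := congrFun (congrArg (fun (L : _ →L[ℝ] ℝ) => (L : _ → ℝ)) this.symm) t
      simp only [ContinuousLinearMap.comp_apply, ContinuousLinearMap.prod_apply,
        ContinuousLinearMap.neg_apply, fderivInnerCLM_apply,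
        ContinuousLinearMap.zero_apply, hproj0 _ hpN] at h3
      have h4 := h3
      rw [real_inner_comm (-(fderiv ℝ proj (proj x)) t)] at h4
      simp only [inner_neg_left] at h4
      have h5 : (⟪fderiv ℝ proj (proj x) t, x - proj x⟫ : ℝ) = 0 := by linarith
      rw [real_inner_comm]
      exact h5
    rw [← hPid _ hpN t ht]
    exact h0
  have horthAv : ∀ x ∈ U, ∀ v, (⟪x - proj x, fderiv ℝ proj x v⟫ : ℝ) = 0 :=
    fun x hx v => horthV x hx _ (hrange x hx v)
  -- derivative of the squared distance function
  have hΦ : ∀ x ∈ U, HasFDerivAt (fun z => (⟪z - proj z, z - proj z⟫ : ℝ))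
      ((2:ℝ) • (innerSL ℝ (x - proj x))) x := by
    intro x hx
    have hV : HasFDerivAt (fun z => z - proj z)
        (ContinuousLinearMap.id ℝ _ - fderiv ℝ proj x) x :=
      (hasFDerivAt_id x).sub (dAt x hx).hasFDerivAt
    have hd := HasFDerivAt.inner ℝ hV hV
    have heq : ((fderivInnerCLM ℝ (x - proj x, x - proj x)).comp
        ((ContinuousLinearMap.id ℝ _ - fderiv ℝ proj x).prod
          (ContinuousLinearMap.id ℝ _ - fderiv ℝ proj x)))
        = (2:ℝ) • (innerSL ℝ (x - proj x)) := by
      ext v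
      simp only [ContinuousLinearMap.smul_apply, innerSL_apply_apply,
        ContinuousLinearMap.comp_apply, ContinuousLinearMap.prod_apply,
        fderivInnerCLM_apply, ContinuousLinearMap.sub_apply,
        ContinuousLinearMap.coe_id', id_eq, smul_eq_mul]
      have e2 : (⟪x - proj x, fderiv ℝ proj x v⟫ : ℝ) = 0 := horthAv x hx v
      rw [inner_sub_left] at e2
      simp only [inner_sub_left, inner_sub_right]
      have c1 := real_inner_comm v x
      have c2 := real_inner_comm v (proj x)
      have c3 := real_inner_comm (fderiv ℝ proj x v) x
      have c4 := real_inner_comm (fderiv ℝ proj x v) (proj x)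
      linarith
    rw [← heq]
    exact hd
  -- second derivative of the squared distance function
  have hf'' : ∀ x ∈ U, HasFDerivAt (fun z => (2:ℝ) • (innerSL ℝ (z - proj z)))
      (((2:ℝ) • (innerSL ℝ : EuclideanSpace ℝ (Fin ν) →L[ℝ]
          EuclideanSpace ℝ (Fin ν) →L[ℝ] ℝ)).comp
        (ContinuousLinearMap.id ℝ _ - fderiv ℝ proj x)) x := by
    intro x hx
    have hV : HasFDerivAt (fun z => z - proj z)
        (ContinuousLinearMap.id ℝ _ - fderiv ℝ proj x) x :=
      (hasFDerivAt_id x).sub (dAt x hx).hasFDerivAt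
    exact (((2:ℝ) • (innerSL ℝ : EuclideanSpace ℝ (Fin ν) →L[ℝ]
      EuclideanSpace ℝ (Fin ν) →L[ℝ] ℝ)).hasFDerivAt).comp x hV
  -- the derivative of proj is self-adjoint everywhere on U
  have hsaA : ∀ x ∈ U, ∀ a b : EuclideanSpace ℝ (Fin ν),
      (⟪fderiv ℝ proj x a, b⟫ : ℝ) = ⟪fderiv ℝ proj x b, a⟫ := by
    intro x hx a b
    have hsym := second_derivative_symmetric_of_eventually
      (f := fun z => (⟪z - proj z, z - proj z⟫ : ℝ))
      (f' := fun z => (2:ℝ) • (innerSL ℝ (z - proj z))) (x := x)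
      (by filter_upwards [hU.mem_nhds hx] with z hz using hΦ z hz) (hf'' x hx) a b
    simp only [ContinuousLinearMap.comp_apply, ContinuousLinearMap.smul_apply,
      ContinuousLinearMap.sub_apply, ContinuousLinearMap.coe_id', id_eq,
      innerSL_apply_apply, smul_eq_mul, inner_sub_left] at hsym
    have hc := real_inner_comm a b
    linarith
  -- rewrite the goal in terms of the second derivative
  rw [iteratedFDeriv_two_apply, iteratedFDeriv_two_apply, iteratedFDeriv_two_apply]
  simp only [Matrix.cons_val_zero, Matrix.cons_val_one, Matrix.head_cons]
  set S : EuclideanSpace ℝ (Fin ν) →L[ℝ] EuclideanSpace ℝ (Fin ν) →L[ℝ]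
      EuclideanSpace ℝ (Fin ν) := fderiv ℝ (fderiv ℝ proj) y with hSdef
  set P : EuclideanSpace ℝ (Fin ν) →L[ℝ] EuclideanSpace ℝ (Fin ν) :=
    fderiv ℝ proj y with hPdef
  have hS : HasFDerivAt (fderiv ℝ proj) S y := (dAAt y hyU).hasFDerivAt
  -- derivative of z ↦ (fderiv proj z) a
  have hflip : ∀ a, HasFDerivAt (fun z => fderiv ℝ proj z a) (S.flip a) y := by
    intro a
    have h1 := hS.clm_apply (hasFDerivAt_const a y)
    simpa using h1
  -- symmetry of the second derivative
  have Ssym : ∀ u v, S u v = S v u := fun u v =>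
    second_derivative_symmetric_of_eventually
      (by filter_upwards [hU.mem_nhds hyU] with z hz using (dAt z hz).hasFDerivAt) hS u v
  -- the second derivative is self-adjoint in the last two arguments
  have hsaS : ∀ v a b : EuclideanSpace ℝ (Fin ν), (⟪b, S v a⟫ : ℝ) = ⟪a, S v b⟫ := by
    intro v a b
    have h1 : HasFDerivAt (fun z => (⟪b, fderiv ℝ proj z a⟫ : ℝ))
        ((innerSL ℝ b).comp (S.flip a)) y := ((innerSL ℝ b).hasFDerivAt).comp y (hflip a)
    have h2 : HasFDerivAt (fun z => (⟪a, fderiv ℝ proj z b⟫ : ℝ))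
        ((innerSL ℝ a).comp (S.flip b)) y := ((innerSL ℝ a).hasFDerivAt).comp y (hflip b)
    have h12 := h1.sub h2
    have h0 : (fun z => (⟪b, fderiv ℝ proj z a⟫ : ℝ) - ⟪a, fderiv ℝ proj z b⟫)
        =ᶠ[nhds y] fun _ => (0:ℝ) := by
      filter_upwards [hU.mem_nhds hyU] with z hz
      have h3 := hsaA z hz a b
      have h4 := real_inner_comm b (fderiv ℝ proj z a)
      have h5 := real_inner_comm a (fderiv ℝ proj z b)
      linarith
    have hzero : HasFDerivAt
        (fun z => (⟪b, fderiv ℝ proj z a⟫ : ℝ) - ⟪a, fderiv ℝ proj z b⟫)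
        (0 : EuclideanSpace ℝ (Fin ν) →L[ℝ] ℝ) y :=
      (hasFDerivAt_const (0:ℝ) y).congr_of_eventuallyEq h0
    have huniq := h12.unique hzero
    have h6 := congrFun (congrArg (fun (L : EuclideanSpace ℝ (Fin ν) →L[ℝ] ℝ)
      => (L : EuclideanSpace ℝ (Fin ν) → ℝ)) huniq) v
    simp only [ContinuousLinearMap.sub_apply, ContinuousLinearMap.comp_apply,
      ContinuousLinearMap.flip_apply, innerSL_apply_apply, ContinuousLinearMap.zero_apply] at h6
    linarith
  -- the structural identity coming from proj ∘ proj = proj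
  have hstar : ∀ v a, S v a = S (P v) (P a) + P (S v a) := by
    intro v a
    have hSc : HasFDerivAt (fderiv ℝ proj) S (proj y) := by rw [hproj0 y hy]; exact hS
    have hc : HasFDerivAt (fun z => fderiv ℝ proj (proj z)) (S.comp P) y :=
      hSc.comp y (dAt y hyU).hasFDerivAt
    have happ := hc.clm_apply (hflip a)
    have heq : (fun z => fderiv ℝ proj z a)
        =ᶠ[nhds y] (fun z => fderiv ℝ proj (proj z) (fderiv ℝ proj z a)) := by
      filter_upwards [hU.mem_nhds hyU] with z hz using (hAA z hz a).symm
    have h2 := happ.congr_of_eventuallyEq heq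
    have huniq := h2.unique (hflip a)
    have h7 := ContinuousLinearMap.ext_iff.mp huniq v
    simp only [ContinuousLinearMap.add_apply, ContinuousLinearMap.comp_apply,
      ContinuousLinearMap.flip_apply] at h7
    rw [hproj0 y hy, ← hPdef] at h7
    exact h7.symm.trans (add_comm _ _)
  -- now the algebra
  have hPw : P w = w := hPid y hy w hw
  have hPh_mem : P h ∈ T y := (hprojT y hy h).1
  have hPPh : P (P h) = P h := hPid y hy _ hPh_mem
  have hPn : P (h - P h) = 0 := hPkill y hy _ (hprojT y hy h).2
  have s1 : (⟪w, S h h⟫ : ℝ) = ⟪h, S h w⟫ := hsaS h h w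
  have s2 : (⟪w, S h (P h)⟫ : ℝ) = ⟪P h, S h w⟫ := hsaS h (P h) w
  have hdec : (⟪h, S h w⟫ : ℝ) = ⟪P h, S h w⟫ + ⟪h - P h, S h w⟫ := by
    rw [← inner_add_left]
    congr 1
    abel
  -- P kills S w (P h)
  have hkill2 : P (S w (P h)) = 0 := by
    have h7 := hstar w (P h)
    rw [hPw, hPPh] at h7
    exact (left_eq_add.mp h7)
  have e6 : (⟪P h, S w (P h)⟫ : ℝ) = 0 := by
    have := hPsa y hy h (S w (P h))
    rw [← hPdef] at this
    rw [this, hkill2, inner_zero_right]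
  have e7 : S w h = S w (P h) + S w (h - P h) := by
    rw [← map_add]
    congr 1
    abel
  have ksym : S h w = S w h := Ssym h w
  have a1 : (⟪h - P h, S w h⟫ : ℝ) = ⟪h - P h, S w (P h)⟫ + ⟪h - P h, P (S w h)⟫ := by
    conv_lhs => rw [hstar w h]
    rw [hPw, inner_add_right]
  have a2 : (⟪h - P h, P (S w h)⟫ : ℝ) = 0 := by
    have h8 := hPsa y hy (h - P h) (S w h)
    rw [← hPdef] at h8
    rw [← h8, hPn, inner_zero_left]
  have a3 : (⟪h - P h, S w (P h)⟫ : ℝ) = ⟪P h, S w (h - P h)⟫ :=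
    hsaS w (P h) (h - P h)
  have R1 : (⟪P h, S w h⟫ : ℝ) = ⟪P h, S w (h - P h)⟫ := by
    conv_lhs => rw [e7]
    rw [inner_add_right, e6, zero_add]
  have key : (⟪h - P h, S h w⟫ : ℝ) = ⟪P h, S h w⟫ := by
    calc (⟪h - P h, S h w⟫ : ℝ) = ⟪h - P h, S w h⟫ := by rw [ksym]
      _ = ⟪h - P h, S w (P h)⟫ + ⟪h - P h, P (S w h)⟫ := a1
      _ = ⟪P h, S w (h - P h)⟫ := by rw [a2, a3, add_zero]
      _ = ⟪P h, S w h⟫ := R1.symm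
      _ = ⟪P h, S h w⟫ := by rw [ksym]
  rw [s1, s2, hdec, key]
end
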